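/- arXiv:1801.08765 — 2 statements merged into one kernel-verified Lean document; each statement's English description precedes it below -/
import Mathlib

section
/- Schanuel's conjecture over the kernel implies the Weak Schanuel conjecture: if for every n and all complex numbers a₁,…,aₙ the transcendence degree of ℚ(πi, a₁, exp a₁, …, aₙ, exp aₙ) over ℚ(πi) is at least dim_ℚ span_ℚ{a₁,…,aₙ, πi} − 1, then for every n and all complex numbers a₁,…,aₙ with trdeg_ℚ(a₁, exp a₁, …, aₙ, exp aₙ) < n there exist integers m₁,…,mₙ, not all zero, such that exp(Σᵢ mᵢ aᵢ) = 1. -/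
set_option maxHeartbeats 1000000
set_option synthInstance.maxHeartbeats 400000

/-- Transcendence degree of an algebra extension. -/
noncomputable def trdeg (F E : Type*) [CommRing F] [CommRing E] [Algebra F E] : Cardinal :=
  ⨆ s : { s : Set E // AlgebraicIndependent F ((↑) : s → E) }, Cardinal.mk s.1

/-- Schanuel's conjecture over the kernel: for all complex `a₁,…,aₙ`, the
transcendence degree of `ℚ(πi, a₁, exp a₁, …, aₙ, exp aₙ)` over `ℚ(πi)` is at least
`dim_ℚ span_ℚ {a₁,…,aₙ, πi} - 1` (stated as `dim ≤ trdeg + 1`). -/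
def SchanuelOverKernel : Prop :=
  ∀ (n : ℕ) (a : Fin n → ℂ),
    Module.rank ℚ (Submodule.span ℚ (insert ((Real.pi : ℂ) * Complex.I) (Set.range a)))
      ≤ trdeg (IntermediateField.adjoin ℚ {((Real.pi : ℂ) * Complex.I)})
          (IntermediateField.adjoin (IntermediateField.adjoin ℚ {((Real.pi : ℂ) * Complex.I)})
            (Set.range a ∪ Set.range fun i => Complex.exp (a i))) + 1

/-- The weak Schanuel conjecture: whenever
`trdeg_ℚ(a₁, exp a₁, …, aₙ, exp aₙ) < n` there are integers `mᵢ`, not all zero,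
with `exp (∑ mᵢ aᵢ) = 1`. -/
def WeakSchanuel : Prop :=
  ∀ (n : ℕ) (a : Fin n → ℂ),
    trdeg ℚ (IntermediateField.adjoin ℚ
        (Set.range a ∪ Set.range fun i => Complex.exp (a i))) < (n : Cardinal) →
    ∃ m : Fin n → ℤ, m ≠ 0 ∧ Complex.exp (∑ i, m i • a i) = 1

/-! ### Auxiliary material: swapping the two variables of a bivariate polynomial -/

section Swap
open Polynomial

noncomputable def swapHom (R : Type) [CommRing R] : R[X][X] →+* R[X][X] :=
  eval₂RingHom (eval₂RingHom ((C : R[X] →+* R[X][X]).comp (C : R →+* R[X])) X) (C X)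

lemma swapHom_CC (R : Type) [CommRing R] (r : R) : swapHom R (C (C r)) = C (C r) := by
  simp [swapHom]

lemma swapHom_CX (R : Type) [CommRing R] : swapHom R (C X) = X := by
  simp [swapHom]

lemma swapHom_X (R : Type) [CommRing R] : swapHom R X = C X := by
  simp [swapHom]

lemma bivar_hom_ext {R S : Type} [CommRing R] [CommRing S] {f g : R[X][X] →+* S}
    (h1 : ∀ r : R, f (C (C r)) = g (C (C r))) (h2 : f (C X) = g (C X)) (h3 : f X = g X) :
    f = g := by
  apply Polynomial.ringHom_ext ?_ h3
  intro p
  have : f.comp (C : R[X] →+* R[X][X]) = g.comp (C : R[X] →+* R[X][X]) :=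
    Polynomial.ringHom_ext (fun r => h1 r) h2
  exact RingHom.congr_fun this p

lemma swapHom_swapHom (R : Type) [CommRing R] (p : R[X][X]) : swapHom R (swapHom R p) = p := by
  have : (swapHom R).comp (swapHom R) = RingHom.id _ := by
    apply bivar_hom_ext <;> simp [swapHom_CC, swapHom_CX, swapHom_X]
  exact RingHom.congr_fun this p

lemma swapHom_injective (R : Type) [CommRing R] : Function.Injective (swapHom R) :=
  Function.LeftInverse.injective (swapHom_swapHom R)

lemma swapHom_eval {R A : Type} [CommRing R] [CommRing A] (α : R →+* A) (x y : A) (p : R[X][X]) :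
    eval₂ (eval₂RingHom α x) y (swapHom R p) = eval₂ (eval₂RingHom α y) x p := by
  have : (eval₂RingHom (eval₂RingHom α x) y).comp (swapHom R)
      = eval₂RingHom (eval₂RingHom α y) x := by
    apply bivar_hom_ext <;> simp [swapHom_CC, swapHom_CX, swapHom_X]
  calc eval₂ (eval₂RingHom α x) y (swapHom R p)
      = (eval₂RingHom (eval₂RingHom α x) y).comp (swapHom R) p := rfl
    _ = eval₂ (eval₂RingHom α y) x p := by rw [this]; rfl

end Swap

/-! ### Auxiliary material: algebraicity over adjoined fields -/

section AlgAux
open IntermediateField Polynomial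

variable {F E : Type} [Field F] [Field E] [Algebra F E]

lemma aeval_mem_algebra_adjoin {S : Set E} (r : MvPolynomial S F) :
    (MvPolynomial.aeval (Subtype.val : S → E)) r ∈ Algebra.adjoin F S := by
  have h1 : (MvPolynomial.aeval (Subtype.val : S → E)) r
      ∈ (MvPolynomial.aeval (Subtype.val : S → E)).range := ⟨r, rfl⟩
  rwa [← Algebra.adjoin_range_eq_range_aeval, Subtype.range_coe] at h1

lemma isAlgebraic_adjoin_field_iff {S : Set E} {x : E} :
    IsAlgebraic (IntermediateField.adjoin F S) x ↔ IsAlgebraic (Algebra.adjoin F S) x := by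
  letI alg : Algebra (Algebra.adjoin F S) (IntermediateField.adjoin F S) :=
    (Subalgebra.inclusion (algebra_adjoin_le_adjoin F S)).toRingHom.toAlgebra
  haveI hscalar : IsScalarTower (Algebra.adjoin F S) (IntermediateField.adjoin F S) E :=
    IsScalarTower.of_algebraMap_eq (fun r => rfl)
  haveI hfr : IsFractionRing (Algebra.adjoin F S) (IntermediateField.adjoin F S) := by
    constructor
    constructor
    · rintro ⟨y, hy⟩
      rw [isUnit_iff_ne_zero]
      intro h
      apply mem_nonZeroDivisors_iff_ne_zero.mp hy
      exact Subtype.ext (show (y : E) = 0 from congrArg Subtype.val h)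
    · intro z
      obtain ⟨r, s, hrs⟩ := (mem_adjoin_iff F (z : E)).mp z.2
      by_cases hs : MvPolynomial.aeval (Subtype.val : S → E) s = 0
      · have hz0 : z = 0 := Subtype.ext (by rw [hrs, hs, div_zero]; rfl)
        exact ⟨⟨0, 1⟩, by simp [hz0]⟩
      · refine ⟨⟨⟨_, aeval_mem_algebra_adjoin r⟩,
          ⟨⟨_, aeval_mem_algebra_adjoin s⟩, mem_nonZeroDivisors_of_ne_zero (fun h => hs ?_)⟩⟩, ?_⟩
        · exact congrArg Subtype.val h
        · apply Subtype.ext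
          show (z : E) * _ = _
          rw [hrs]
          exact div_mul_cancel₀ _ hs
    · intro a b h
      have h2 : (a : E) = (b : E) :=
        show ((algebraMap _ (IntermediateField.adjoin F S) a : IntermediateField.adjoin F S) : E)
            = ((algebraMap _ (IntermediateField.adjoin F S) b : IntermediateField.adjoin F S) : E)
          from congrArg Subtype.val h
      exact ⟨1, by rw [Subtype.ext h2]⟩
  exact (IsFractionRing.isAlgebraic_iff (Algebra.adjoin F S) (IntermediateField.adjoin F S) E).symm

lemma memIsAlg {K : IntermediateField F E} {x : E} (hx : x ∈ K) : IsAlgebraic K x := by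
  have h := isAlgebraic_algebraMap (R := K) (A := E) (⟨x, hx⟩ : K)
  simpa using h

lemma isAlg_mono {S S' : Set E} (h : S ⊆ S') {x : E} :
    IsAlgebraic (adjoin F S) x → IsAlgebraic (adjoin F S') x := by
  intro hx
  have hle : (adjoin F S).toSubalgebra ≤ (adjoin F S').toSubalgebra :=
    fun z hz => adjoin.mono F _ _ h hz
  exact IsAlgebraic.tower_top_of_subalgebra_le hle hx

lemma isAlg_trans_adjoin' {S T : Set E} {x : E}
    (hS : ∀ s ∈ S, IsAlgebraic (adjoin F T) s) (hx : IsAlgebraic (adjoin F S) x) :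
    IsAlgebraic (adjoin F T) x := by
  set K := adjoin F T
  haveI halg : Algebra.IsAlgebraic K (adjoin K S) :=
    IntermediateField.isAlgebraic_adjoin (fun s hs => (hS s hs).isIntegral)
  haveI : Algebra.IsIntegral K (adjoin K S) := Algebra.isAlgebraic_iff_isIntegral.mp halg
  have hx2 : IsAlgebraic ((adjoin K S).restrictScalars F) x := by
    rw [adjoin_adjoin_left]
    exact isAlg_mono Set.subset_union_right hx
  have hx3 : IsAlgebraic (adjoin K S) x := hx2
  exact (isIntegral_trans x hx3.isIntegral).isAlgebraic

lemma isAlg_trans_adjoin {S : Set E} {x : E}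
    (hS : ∀ s ∈ S, IsAlgebraic F s) (hx : IsAlgebraic (adjoin F S) x) : IsAlgebraic F x := by
  haveI halg : Algebra.IsAlgebraic F (adjoin F S) :=
    IntermediateField.isAlgebraic_adjoin (fun s hs => (hS s hs).isIntegral)
  haveI : Algebra.IsIntegral F (adjoin F S) := Algebra.isAlgebraic_iff_isIntegral.mp halg
  exact (isIntegral_trans x hx.isIntegral).isAlgebraic

lemma algIndep_insert_iff {s : Set E} {a : E}
    (hs : AlgebraicIndependent F (Subtype.val : s → E)) (ha' : a ∉ s) :
    AlgebraicIndependent F (Subtype.val : ↥(insert a s) → E) ↔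
      Transcendental (IntermediateField.adjoin F s) a := by
  haveI := Classical.decEq E
  have key : (fun o : Option s => o.elim a Subtype.val) ∘ (Set.subtypeInsertEquivOption ha') =
      (Subtype.val : ↥(insert a s) → E) := by
    ext x
    by_cases h : ↑x = a <;> simp [Set.subtypeInsertEquivOption, h]
  have h1 : AlgebraicIndependent F (Subtype.val : ↥(insert a s) → E) ↔
      AlgebraicIndependent F (fun o : Option s => o.elim a Subtype.val) :=
    algebraicIndependent_equiv' (Set.subtypeInsertEquivOption ha') key
  rw [h1, hs.option_iff_transcendental a]
  unfold Transcendental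
  rw [not_iff_not]
  rw [Subtype.range_coe]
  exact isAlgebraic_adjoin_field_iff.symm

/-! ### The one-step exchange lemma -/

lemma exchange_step {u v : E} (h1 : IsAlgebraic (adjoin F ({v} : Set E)) u)
    (h2 : Transcendental F u) : IsAlgebraic (adjoin F ({u} : Set E)) v := by
  by_cases hv : IsAlgebraic F v
  · exact absurd (isAlg_trans_adjoin (by simpa using hv) h1) h2
  rw [isAlgebraic_adjoin_field_iff] at h1 ⊢
  obtain ⟨p, hp0, hpu⟩ := h1
  have hrep : ∀ c : Algebra.adjoin F ({v} : Set E), ∃ f : F[X],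
      Polynomial.aeval v f = (c : E) := by
    intro c
    exact (Algebra.adjoin_singleton_eq_range_aeval F v).le c.2
  choose rep hrep using hrep
  have hrepinj : ∀ c, c ≠ 0 → rep c ≠ 0 := by
    intro c hc h0
    apply hc
    have : (c : E) = 0 := by rw [← hrep c, h0, map_zero]
    exact Subtype.ext this
  set d := p.natDegree with hd
  set Q : F[X][X] := ∑ i ∈ Finset.range (d+1), Polynomial.C (rep (p.coeff i)) * Polynomial.X ^ i
    with hQ
  have hQcoeff : ∀ k ∈ Finset.range (d+1), Q.coeff k = rep (p.coeff k) := by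
    intro k hk
    rw [hQ, Polynomial.finset_sum_coeff, Finset.sum_eq_single k]
    · simp
    · intro i _ hik
      simp [Polynomial.coeff_C_mul, Polynomial.coeff_X_pow, Ne.symm hik]
    · intro h; exact absurd hk h
  have hQne : Q ≠ 0 := by
    intro h0
    have hld : p.coeff d ≠ 0 := by
      rw [hd]; exact Polynomial.leadingCoeff_ne_zero.mpr hp0
    have := hQcoeff d (Finset.self_mem_range_succ d)
    rw [h0] at this
    exact hrepinj _ hld (by simpa using this.symm)
  have heval : Polynomial.eval₂ (eval₂RingHom (algebraMap F E) v) u Q = 0 := by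
    have step1 : Polynomial.eval₂ (eval₂RingHom (algebraMap F E) v) u Q =
        ∑ i ∈ Finset.range (d+1), Polynomial.aeval v (rep (p.coeff i)) * u ^ i := by
      rw [hQ, Polynomial.eval₂_finset_sum]
      refine Finset.sum_congr rfl (fun i _ => ?_)
      rw [Polynomial.eval₂_mul, Polynomial.eval₂_C, Polynomial.eval₂_X_pow]
      rfl
    rw [step1]
    have step2 : ∑ i ∈ Finset.range (d+1), Polynomial.aeval v (rep (p.coeff i)) * u ^ i =
        ∑ i ∈ Finset.range (d+1), ((p.coeff i : E)) * u ^ i :=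
      Finset.sum_congr rfl (fun i _ => by rw [hrep])
    rw [step2]
    have step3 := Polynomial.aeval_eq_sum_range (R := Algebra.adjoin F ({v} : Set E)) (S := E)
      (p := p) u
    rw [step3] at hpu
    rw [← hpu]
    exact Finset.sum_congr rfl (fun i _ => by rw [Algebra.smul_def]; rfl)
  have hQ'ne : swapHom F Q ≠ 0 := by
    intro h
    exact hQne (swapHom_injective F (by simpa using h))
  have heval' : Polynomial.eval₂ (eval₂RingHom (algebraMap F E) u) v (swapHom F Q) = 0 := by
    rw [swapHom_eval]; exact heval
  have hmem : ∀ f : F[X], Polynomial.aeval u f ∈ (Algebra.adjoin F ({u} : Set E)).toSubring :=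
    fun f => Polynomial.aeval_mem_adjoin_singleton F u
  set ψ : F[X] →+* (Algebra.adjoin F ({u} : Set E)) :=
    RingHom.codRestrict (Polynomial.aeval u : F[X] →ₐ[F] E).toRingHom _ hmem with hψ
  have hψinj : Function.Injective ψ := by
    intro a b h
    have : Polynomial.aeval u a = Polynomial.aeval u b := congrArg Subtype.val h
    exact (transcendental_iff_injective.mp h2) this
  refine ⟨(swapHom F Q).map ψ,
    fun h => hQ'ne (Polynomial.map_injective ψ hψinj (by simpa using h)), ?_⟩
  rw [Polynomial.aeval_def, Polynomial.eval₂_map]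
  have hcomp : (algebraMap (Algebra.adjoin F ({u} : Set E)) E).comp ψ =
      (eval₂RingHom (algebraMap F E) u : F[X] →+* E) := by
    apply Polynomial.ringHom_ext
    · intro a
      show (Polynomial.aeval u (Polynomial.C a) : E) = _
      simp
    · show (Polynomial.aeval u (Polynomial.X : F[X]) : E) = _
      simp
  rw [hcomp]
  exact heval'

/-! ### Iterated exchange -/

omit [Field F] [Algebra F E] in
lemma range_fin_split {k : ℕ} (t : Fin (k+1) → E) :
    Set.range t = Set.range (t ∘ Fin.castSucc) ∪ {t (Fin.last k)} := by
  ext z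
  constructor
  · rintro ⟨i, rfl⟩
    rcases Fin.eq_castSucc_or_eq_last i with ⟨j, rfl⟩ | rfl
    · exact Or.inl ⟨j, rfl⟩
    · exact Or.inr rfl
  · rintro (⟨j, rfl⟩ | h)
    · exact ⟨j.castSucc, rfl⟩
    · exact ⟨Fin.last k, h.symm⟩

lemma exchange_find :
    ∀ (k : ℕ) (t : Fin (k+1) → E) (u : E), Transcendental F u →
      IsAlgebraic (adjoin F (Set.range t)) u →
      ∃ j : Fin (k+1), IsAlgebraic (adjoin F (insert u (Set.range (t ∘ j.succAbove)))) (t j) := by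
  intro k
  induction k with
  | zero =>
    intro t u hu halg
    refine ⟨0, ?_⟩
    have hr : Set.range t = ({t 0} : Set E) := by
      rw [range_fin_split t]
      simp [Set.range_eq_empty]
    rw [hr] at halg
    have h3 := exchange_step halg hu
    have hr2 : insert u (Set.range (t ∘ (0 : Fin 1).succAbove)) = ({u} : Set E) := by
      rw [Set.range_eq_empty]
      simp
    rw [hr2]
    exact h3
  | succ k ih =>
    intro t u hu halg
    by_cases h : IsAlgebraic (adjoin F (Set.range (t ∘ Fin.castSucc))) u
    · obtain ⟨j, hj⟩ := ih (t ∘ Fin.castSucc) u hu h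
      refine ⟨j.castSucc, isAlg_mono ?_ hj⟩
      apply Set.insert_subset_insert
      rintro z ⟨i, rfl⟩
      have hne : (Fin.castSucc (j.succAbove i)) ≠ j.castSucc :=
        fun hh => Fin.succAbove_ne j i (Fin.castSucc_injective _ hh)
      obtain ⟨i', hi'⟩ := Fin.exists_succAbove_eq hne
      exact ⟨i', by simp [hi']⟩
    · set L := adjoin F (Set.range (t ∘ Fin.castSucc))
      have h1 : IsAlgebraic (adjoin (↥L) ({t (Fin.last (k+1))} : Set E)) u := by
        show IsAlgebraic ((adjoin (↥L) ({t (Fin.last (k+1))} : Set E)).restrictScalars F) u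
        rw [adjoin_adjoin_left]
        rw [range_fin_split t] at halg
        exact halg
      have h2 : Transcendental (↥L) u := h
      have h3 := exchange_step h1 h2
      refine ⟨Fin.last (k+1), ?_⟩
      rw [Fin.succAbove_last]
      show IsAlgebraic (adjoin F (insert u (Set.range (t ∘ Fin.castSucc)))) (t (Fin.last (k+1)))
      have hh : IsAlgebraic ((adjoin (↥L) ({u} : Set E)).restrictScalars F) (t (Fin.last (k+1)))
        := h3
      rw [adjoin_adjoin_left] at hh
      rwa [Set.union_comm, ← Set.insert_eq] at hh

lemma tail_indep {m : ℕ} {y : Fin (m+2) → E} (hy : AlgebraicIndependent F y) :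
    AlgebraicIndependent (↥(adjoin F ({y 0} : Set E))) (y ∘ Fin.succ) := by
  set L := adjoin F ({y 0} : Set E)
  have hyinj : Function.Injective y := hy.injective
  have hsinj : Function.Injective (y ∘ Fin.succ) :=
    hyinj.comp (Fin.succ_injective _)
  rw [← algebraicIndependent_subtype_range hsinj]
  apply algebraicIndependent_of_finite' _ (algebraMap (↥L) E).injective
  intro t hts htfin _ a ha hat
  have htr : t ⊆ Set.range y := hts.trans (Set.range_comp_subset_range _ _)
  have har : a ∈ Set.range y := Set.range_comp_subset_range _ _ ha
  have hy0 : y 0 ∉ t := by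
    intro h0
    obtain ⟨i, hi⟩ := hts h0
    exact (Fin.succ_ne_zero i) (hyinj hi)
  have hay0 : a ≠ y 0 := by
    obtain ⟨i, hi⟩ := ha
    rw [← hi]
    exact fun hh => Fin.succ_ne_zero i (hyinj hh)
  have hsub : insert (y 0) t ⊆ Set.range y := Set.insert_subset ⟨0, rfl⟩ htr
  have hindep1 : AlgebraicIndependent F (Subtype.val : ↥(insert (y 0) t) → E) :=
    hy.coe_range.mono hsub
  have hnotmem : a ∉ insert (y 0) t := by
    simp only [Set.mem_insert_iff]
    rintro (h | h); exacts [hay0 h, hat h]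
  have hindep2 : AlgebraicIndependent F (Subtype.val : ↥(insert a (insert (y 0) t)) → E) :=
    hy.coe_range.mono (Set.insert_subset har hsub)
  have htrans : Transcendental (adjoin F (insert (y 0) t)) a :=
    (algIndep_insert_iff hindep1 hnotmem).mp hindep2
  intro halg
  apply htrans
  have step1 : IsAlgebraic (adjoin (↥L) t) a :=
    IsAlgebraic.tower_top_of_subalgebra_le (algebra_adjoin_le_adjoin (↥L) t) halg
  have step2 : IsAlgebraic ((adjoin (↥L) t).restrictScalars F) a := step1
  rw [adjoin_adjoin_left] at step2
  rwa [Set.singleton_union] at step2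

lemma no_indep : ∀ (m : ℕ) (F : Type) [Field F] [Algebra F E]
    (t : Fin m → E) (y : Fin (m+1) → E),
    AlgebraicIndependent F y →
    (∀ i, IsAlgebraic (IntermediateField.adjoin F (Set.range t)) (y i)) → False := by
  intro m
  induction m with
  | zero =>
    intro F _ _ t y hy halg
    exact hy.transcendental 0 (isAlg_trans_adjoin (by simp [Set.range_eq_empty]) (halg 0))
  | succ m ih =>
    intro F _ _ t y hy halg
    obtain ⟨j, hj⟩ := exchange_find m t (y 0) (hy.transcendental 0) (halg 0)
    set L := adjoin F ({y 0} : Set E)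
    refine ih (↥L) (t ∘ j.succAbove) (y ∘ Fin.succ) (tail_indep hy) (fun i => ?_)
    apply isAlg_trans_adjoin' (F := ↥L) (S := Set.range t)
    · rintro s ⟨i', rfl⟩
      by_cases hij : i' = j
      · subst hij
        have hthis : IsAlgebraic
            ((adjoin (↥L) (Set.range (t ∘ i'.succAbove))).restrictScalars F) (t i') := by
          rw [adjoin_adjoin_left, Set.singleton_union]
          exact hj
        exact hthis
      · refine memIsAlg (subset_adjoin _ _ ?_)
        obtain ⟨i'', hi''⟩ := Fin.exists_succAbove_eq hij
        exact ⟨i'', congrArg t hi''⟩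
    · have hthis : IsAlgebraic ((adjoin (↥L) (Set.range t)).restrictScalars F) (y i.succ) := by
        rw [adjoin_adjoin_left, Set.singleton_union]
        exact isAlg_mono (Set.subset_insert _ _) (halg i.succ)
      exact hthis

end AlgAux

/-! ### Cardinal and rational helpers -/

lemma card_le_of_lt_nat {c : Cardinal} {n : ℕ} (h : c < ((n+1 : ℕ) : Cardinal)) :
    c ≤ ((n : ℕ) : Cardinal) := by
  obtain ⟨k, rfl⟩ := Cardinal.lt_aleph0.mp (h.trans (Cardinal.nat_lt_aleph0 _))
  have hk : k < n + 1 := by exact_mod_cast h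
  exact_mod_cast Nat.lt_succ_iff.mp hk

lemma card_succ_le_succ {c : Cardinal} {n : ℕ} (h : (n : Cardinal) + 1 ≤ c + 1) :
    (n : Cardinal) ≤ c := by
  rcases lt_or_ge c Cardinal.aleph0 with hc | hc
  · obtain ⟨k, rfl⟩ := Cardinal.lt_aleph0.mp hc
    have h2 : ((n+1 : ℕ) : Cardinal) ≤ ((k+1 : ℕ) : Cardinal) := by push_cast; exact h
    have h3 : n + 1 ≤ k + 1 := by exact_mod_cast h2
    exact_mod_cast Nat.succ_le_succ_iff.mp h3
  · calc (n : Cardinal) ≤ (n : Cardinal) + 1 := le_self_add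
      _ ≤ c + 1 := h
      _ = c := Cardinal.add_one_eq hc

lemma den_mul_self (q : ℚ) : (q.den : ℚ) * q = (q.num : ℚ) := by
  have h0 : (q.den : ℚ) ≠ 0 := by exact_mod_cast q.den_ne_zero
  rw [mul_comm]
  nth_rewrite 1 [← Rat.num_div_den q]
  exact div_mul_cancel₀ _ h0

/-! ### Main theorem -/

open IntermediateField in
/-- **Schanuel's conjecture over the kernel implies the weak Schanuel conjecture.** -/
theorem sc_over_kernel_implies_weak_sc : SchanuelOverKernel → WeakSchanuel := by
  intro hSOK n a htr
  by_contra hcon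
  push_neg at hcon
  classical
  rcases Nat.eq_zero_or_pos n with hn0 | hnpos
  · subst hn0
    exact not_lt_of_ge (Cardinal.zero_le _) (by exact_mod_cast htr)
  set piI : ℂ := (Real.pi : ℂ) * Complex.I with hpiIdef
  have hpiI0 : piI ≠ 0 :=
    mul_ne_zero (by exact_mod_cast Real.pi_ne_zero) Complex.I_ne_zero
  set G : Set ℂ := Set.range a ∪ Set.range (fun i => Complex.exp (a i)) with hGdef
  set F₀ : IntermediateField ℚ ℂ := IntermediateField.adjoin ℚ {piI} with hF₀def
  set K : IntermediateField ℚ ℂ := IntermediateField.adjoin ℚ G with hKdef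
  set K' : IntermediateField (↥F₀) ℂ := IntermediateField.adjoin (↥F₀) G with hK'def
  -- Step 1: πi together with the aᵢ is linearly independent over ℚ
  set z : Fin (n+1) → ℂ := Fin.cons piI a with hzdef
  have hzli : LinearIndependent ℚ z := by
    rw [Fintype.linearIndependent_iff]
    intro g hg
    rw [Fin.sum_univ_succ] at hg
    simp only [hzdef, Fin.cons_zero, Fin.cons_succ] at hg
    have htail : ∀ i : Fin n, g i.succ = 0 := by
      by_contra hne
      push_neg at hne
      obtain ⟨i0, hi0⟩ := hne
      set P : ℕ := ∏ i : Fin n, (g i.succ).den with hP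
      set D : ℕ := 2 * ((g 0).den * P) with hD
      have hPpos : 0 < P := Finset.prod_pos (fun i _ => (g i.succ).den_pos)
      have hDpos : 0 < D := by
        apply Nat.mul_pos (by norm_num)
        exact Nat.mul_pos (g 0).den_pos hPpos
      set m : Fin n → ℤ := fun i => ((D / (g i.succ).den : ℕ) : ℤ) * (g i.succ).num with hm
      have hmQ : ∀ i, ((m i : ℤ) : ℚ) = (D : ℚ) * g i.succ := by
        intro i
        have hdvd : (g i.succ).den ∣ D := by
          have h1 : (g i.succ).den ∣ P := Finset.dvd_prod_of_mem _ (Finset.mem_univ i)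
          exact (h1.mul_left (g 0).den).mul_left 2
        obtain ⟨c, hc⟩ := hdvd
        have hdiv : D / (g i.succ).den = c := by
          rw [hc]; exact Nat.mul_div_cancel_left _ (g i.succ).den_pos
        have hDq : (D : ℚ) = ((g i.succ).den : ℚ) * (c : ℚ) := by exact_mod_cast hc
        calc ((m i : ℤ) : ℚ) = ((D / (g i.succ).den : ℕ) : ℚ) * ((g i.succ).num : ℚ) := by
              rw [hm]; rw [Int.cast_mul, Int.cast_natCast]
          _ = (c : ℚ) * (((g i.succ).den : ℚ) * g i.succ) := by rw [hdiv, den_mul_self]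
          _ = (D : ℚ) * g i.succ := by rw [hDq]; ring
      have hm0Q : ((2 * (P * (g 0).num) : ℤ) : ℚ) = (D : ℚ) * g 0 := by
        have hc : D = (g 0).den * (2 * P) := by rw [hD]; ring
        have hDq : (D : ℚ) = ((g 0).den : ℚ) * ((2 * P : ℕ) : ℚ) := by exact_mod_cast hc
        calc ((2 * (P * (g 0).num) : ℤ) : ℚ)
            = ((2 * P : ℕ) : ℚ) * (((g 0).den : ℚ) * g 0) := by rw [den_mul_self]; push_cast; ring
          _ = (D : ℚ) * g 0 := by rw [hDq]; ring
      have hrel : ∑ i : Fin n, ((g i.succ : ℚ) : ℂ) * a i = -(((g 0 : ℚ) : ℂ) * piI) := by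
        have h2 : ∑ i : Fin n, g i.succ • a i = -(g 0 • piI) := eq_neg_of_add_eq_zero_right hg
        calc ∑ i : Fin n, ((g i.succ : ℚ) : ℂ) * a i = ∑ i : Fin n, g i.succ • a i :=
              Finset.sum_congr rfl (fun i _ => (Rat.smul_def _ _).symm)
          _ = -(g 0 • piI) := h2
          _ = -(((g 0 : ℚ) : ℂ) * piI) := by rw [Rat.smul_def]
      have hexp : Complex.exp (∑ i, m i • a i) = 1 := by
        have hsum : ∑ i : Fin n, m i • a i = -(((2 * (P * (g 0).num) : ℤ) : ℂ) * piI) := by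
          calc ∑ i : Fin n, m i • a i = ∑ i : Fin n, (((m i : ℤ) : ℚ) : ℂ) * a i := by
                refine Finset.sum_congr rfl (fun i _ => ?_)
                rw [zsmul_eq_mul]; norm_num
            _ = ∑ i : Fin n, ((D : ℚ) : ℂ) * (((g i.succ : ℚ) : ℂ) * a i) := by
                refine Finset.sum_congr rfl (fun i _ => ?_)
                rw [← mul_assoc]
                congr 1
                have hcast : ((m i : ℤ) : ℂ) = (((D : ℚ) * g i.succ : ℚ) : ℂ) := by
                  exact_mod_cast congrArg (fun q : ℚ => (q : ℂ)) (hmQ i)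
                push_cast at hcast ⊢
                rw [hcast]
            _ = ((D : ℚ) : ℂ) * ∑ i : Fin n, ((g i.succ : ℚ) : ℂ) * a i := by
                rw [Finset.mul_sum]
            _ = ((D : ℚ) : ℂ) * -(((g 0 : ℚ) : ℂ) * piI) := by rw [hrel]
            _ = -((((D : ℚ) * g 0 : ℚ) : ℂ) * piI) := by push_cast; ring
            _ = -(((2 * (P * (g 0).num) : ℤ) : ℂ) * piI) := by rw [← hm0Q]; push_cast; ring
        rw [hsum, hpiIdef]
        have hre : -(((2 * (P * (g 0).num) : ℤ) : ℂ) * ((Real.pi : ℂ) * Complex.I))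
            = ((-(P * (g 0).num) : ℤ) : ℂ) * (2 * (Real.pi : ℂ) * Complex.I) := by
          push_cast; ring
        rw [hre]
        exact Complex.exp_int_mul_two_pi_mul_I _
      have hmne : m ≠ 0 := by
        intro h0
        have h1 : ((m i0 : ℤ) : ℚ) = 0 := by rw [h0]; simp
        rw [hmQ i0] at h1
        rcases mul_eq_zero.mp h1 with h | h
        · have : (D : ℚ) ≠ 0 := by exact_mod_cast hDpos.ne'
          exact this h
        · exact hi0 h
      exact hcon m hmne hexp
    have hg0 : g 0 = 0 := by
      have hz : g 0 • piI = 0 := by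
        have h2 : ∑ i : Fin n, g i.succ • a i = 0 :=
          Finset.sum_eq_zero (fun i _ => by rw [htail i, zero_smul])
        rw [h2, add_zero] at hg
        exact hg
      rcases smul_eq_zero.mp hz with h | h
      · exact h
      · exact absurd h hpiI0
    intro j
    refine Fin.cases ?_ ?_ j
    · exact hg0
    · exact htail
  -- Step 2: the span has rank n+1, so Schanuel over the kernel gives trdeg ≥ n
  have hrank : Module.rank ℚ (Submodule.span ℚ (insert piI (Set.range a)))
      = ((n+1 : ℕ) : Cardinal) := by
    have hzr : insert piI (Set.range a) = Set.range z := (Fin.range_cons piI a).symm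
    rw [hzr, rank_span hzli, Cardinal.mk_range_eq z hzli.injective, Cardinal.mk_fin]
  have hSOKn := hSOK n a
  rw [← hpiIdef, ← hF₀def, ← hGdef, ← hK'def, hrank] at hSOKn
  have htF : (n : Cardinal) ≤ trdeg (↥F₀) ↥K' := by
    apply card_succ_le_succ
    have hcast : ((n+1 : ℕ) : Cardinal) = (n : Cardinal) + 1 := by push_cast; ring
    rwa [hcast] at hSOKn
  -- Step 3: extract an algebraically independent family of size n in K'
  have hex : ∃ S : Set ↥K', AlgebraicIndependent (↥F₀) ((↑) : S → ↥K')
      ∧ (n : Cardinal) ≤ Cardinal.mk ↥S := by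
    by_contra hno
    push_neg at hno
    have hn1 : n - 1 + 1 = n := Nat.succ_pred_eq_of_pos hnpos
    have hbound : ∀ s : {s : Set ↥K' // AlgebraicIndependent (↥F₀) ((↑) : s → ↥K')},
        Cardinal.mk ↥s.1 ≤ ((n-1 : ℕ) : Cardinal) := by
      intro s
      apply card_le_of_lt_nat
      have : ((n - 1 + 1 : ℕ) : Cardinal) = (n : Cardinal) := by rw [hn1]
      rw [this]
      exact hno s.1 s.2
    have hsup : trdeg (↥F₀) ↥K' ≤ ((n-1 : ℕ) : Cardinal) := ciSup_le' hbound
    have hle : (n : Cardinal) ≤ ((n-1 : ℕ) : Cardinal) := htF.trans hsup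
    have : n ≤ n - 1 := by exact_mod_cast hle
    omega
  obtain ⟨S, hSind, hScard⟩ := hex
  rw [← Cardinal.mk_fin n, Cardinal.le_def] at hScard
  obtain ⟨emb⟩ := hScard
  set y : Fin n → ℂ := fun i => ((emb i : ↥K') : ℂ) with hydef
  have hyind : AlgebraicIndependent (↥F₀) y := by
    have h1 : AlgebraicIndependent (↥F₀) ((Subtype.val : S → ↥K') ∘ emb) :=
      hSind.comp emb emb.injective
    have h2 := h1.map' (f := K'.val) Subtype.val_injective
    exact h2
  have hymem : ∀ i, y i ∈ K' := fun i => (emb i : ↥K').2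
  -- Step 4: a maximal algebraically independent subset T of the generators G
  have hGfin : G.Finite := (Set.finite_range a).union (Set.finite_range (fun i => Complex.exp (a i)))
  obtain ⟨T, hTsub0, hTmax⟩ := exists_maximal_algebraicIndependent (R := ℚ) (∅ : Set ℂ) G
    (Set.empty_subset G) (algebraicIndependent_empty (K := ℚ) (A := ℂ))
  have hTind : AlgebraicIndependent ℚ (Subtype.val : T → ℂ) := hTmax.1.1
  have hTG : T ⊆ G := hTmax.1.2
  have halgG : ∀ g ∈ G, IsAlgebraic (adjoin ℚ T) g := by
    intro g hg
    by_cases hgT : g ∈ T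
    · exact memIsAlg (subset_adjoin _ _ hgT)
    · by_contra htrans
      have hins : AlgebraicIndependent ℚ (Subtype.val : ↥(insert g T) → ℂ) :=
        (algIndep_insert_iff hTind hgT).mpr htrans
      have hsub : insert g T ⊆ T :=
        hTmax.2 ⟨hins, Set.insert_subset hg hTG⟩ (Set.subset_insert g T)
      exact hgT (hsub (Set.mem_insert g T))
  -- Step 5: T is finite of cardinality < n
  have hTfin : T.Finite := hGfin.subset hTG
  haveI := hTfin.fintype
  set r := Fintype.card ↥T with hrdef
  set e : Fin r ≃ ↥T := (Fintype.equivFin ↥T).symm with hedef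
  set t : Fin r → ℂ := fun i => ((e i : ℂ)) with htdef
  have htrange : Set.range t = T := by
    ext x
    constructor
    · rintro ⟨i, rfl⟩; exact (e i).2
    · intro hx
      refine ⟨e.symm ⟨x, hx⟩, ?_⟩
      show ((e (e.symm ⟨x, hx⟩) : ↥T) : ℂ) = x
      rw [Equiv.apply_symm_apply]
  have hTK : ∀ x : ↥T, (x : ℂ) ∈ K := fun x => subset_adjoin _ _ (hTG x.2)
  set f : ↥T → ↥K := fun x => ⟨(x : ℂ), hTK x⟩ with hfdef
  have hfinj : Function.Injective f := by
    intro a1 b1 h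
    have h2 := Subtype.ext_iff.mp h
    exact Subtype.ext h2
  have hfind : AlgebraicIndependent ℚ f := by
    have h2 : AlgebraicIndependent ℚ (⇑K.val ∘ f) := hTind
    exact (AlgHom.algebraicIndependent_iff K.val Subtype.val_injective).mp h2
  have hrn : r < n := by
    have hrangef : AlgebraicIndependent ℚ ((↑) : (Set.range f) → ↥K) := hfind.coe_range
    have hmk1 : Cardinal.mk ↥(Set.range f) ≤ trdeg ℚ ↥K :=
      le_ciSup (Cardinal.bddAbove_range _)
        (⟨Set.range f, hrangef⟩ : {s : Set ↥K // AlgebraicIndependent ℚ ((↑) : s → ↥K)})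
    have hmk2 : Cardinal.mk ↥(Set.range f) = (r : Cardinal) := by
      rw [Cardinal.mk_range_eq f hfinj, Cardinal.mk_fintype]
    have : (r : Cardinal) < (n : Cardinal) := by
      rw [← hmk2]
      exact hmk1.trans_lt htr
    exact_mod_cast this
  -- Step 6: every y i is algebraic over F₀(T)
  have hyalg : ∀ i, IsAlgebraic (adjoin (↥F₀) (Set.range t)) (y i) := by
    intro i
    rw [htrange]
    apply isAlg_trans_adjoin' (F := ↥F₀) (S := G) (T := T)
    · intro g hg
      have hle2 : adjoin ℚ T ≤ (adjoin (↥F₀) T).restrictScalars ℚ := by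
        apply adjoin_le_iff.mpr
        exact fun zz hzz => (IntermediateField.mem_restrictScalars ℚ).mpr (subset_adjoin _ _ hzz)
      have hle : (adjoin ℚ T).toSubalgebra ≤ ((adjoin (↥F₀) T).restrictScalars ℚ).toSubalgebra :=
        fun x hx => hle2 hx
      have h2 : IsAlgebraic ((adjoin (↥F₀) T).restrictScalars ℚ) g :=
        IsAlgebraic.tower_top_of_subalgebra_le hle (halgG g hg)
      exact h2
    · exact memIsAlg (hymem i)
  -- Step 7: contradiction with the exchange lemma
  have hr1 : r + 1 ≤ n := hrn
  exact no_indep r (↥F₀) t (y ∘ Fin.castLE hr1)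
    (hyind.comp (Fin.castLE hr1) (Fin.castLE_injective hr1))
    (fun i => hyalg _)
end

section
/- (SCP_{Q̄} implies SCP_alg). Suppose that for every n and all complex numbers a₁,…,aₙ one has dim_{Q̄} span_{Q̄}{a₁,…,aₙ} + trdeg_ℚ(exp a₁,…,exp aₙ) ≥ dim_ℚ span_ℚ{a₁,…,aₙ}, where Q̄ is the subfield of algebraic numbers in ℂ. Then for every algebraic number ρ and all complex numbers a₁, b₁, …, aₙ, bₙ such that each bᵢ is a value of aᵢ^ρ: if a₁, b₁, …, aₙ, bₙ are multiplicatively independent, then trdeg_ℚ(a₁, b₁, …, aₙ, bₙ) ≥ n. -/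
set_option maxHeartbeats 1000000
set_option synthInstance.maxHeartbeats 400000

/-- The subfield `Q̄` of `ℂ` consisting of the numbers algebraic over `ℚ`. -/
noncomputable def Qbar : Subfield ℂ where
  carrier := {x | IsAlgebraic ℚ x}
  add_mem' := fun ha hb => isAlgebraic_iff_isIntegral.mpr
    ((isAlgebraic_iff_isIntegral.mp ha).add (isAlgebraic_iff_isIntegral.mp hb))
  mul_mem' := fun ha hb => isAlgebraic_iff_isIntegral.mpr
    ((isAlgebraic_iff_isIntegral.mp ha).mul (isAlgebraic_iff_isIntegral.mp hb))
  neg_mem' := fun ha => isAlgebraic_iff_isIntegral.mpr (isAlgebraic_iff_isIntegral.mp ha).neg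
  one_mem' := isAlgebraic_one
  zero_mem' := isAlgebraic_zero
  inv_mem' := fun _ hx => hx.inv

/-- SCP over `Q̄`: for all complex `a₁,…,aₙ`,
`dim_{Q̄} span_{Q̄} {a₁,…,aₙ} + trdeg_ℚ(exp a₁,…,exp aₙ) ≥ dim_ℚ span_ℚ {a₁,…,aₙ}`. -/
def SCPQbar : Prop :=
  ∀ (n : ℕ) (a : Fin n → ℂ),
    Module.rank ℚ (Submodule.span ℚ (Set.range a))
      ≤ Module.rank Qbar (Submodule.span Qbar (Set.range a))
        + trdeg ℚ (IntermediateField.adjoin ℚ (Set.range fun i => Complex.exp (a i)))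

theorem range_fin_append {m k : ℕ} {γ : Type*} (u : Fin m → γ) (v : Fin k → γ) :
    Set.range (Fin.append u v) = Set.range u ∪ Set.range v := by
  ext x
  constructor
  · rintro ⟨i, rfl⟩
    refine Fin.addCases (fun j => ?_) (fun j => ?_) i
    · exact Or.inl ⟨j, (Fin.append_left u v j).symm⟩
    · exact Or.inr ⟨j, (Fin.append_right u v j).symm⟩
  · rintro (⟨j, rfl⟩ | ⟨j, rfl⟩)
    · exact ⟨Fin.castAdd _ j, Fin.append_left u v j⟩
    · exact ⟨Fin.natAdd _ j, Fin.append_right u v j⟩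

/-- **SCP_{Q̄} implies SCP_alg:** for every algebraic `ρ` and complex numbers
`aᵢ, bᵢ` with `bᵢ` a value of `aᵢ^ρ`, if the `aᵢ, bᵢ` are multiplicatively independent
then `trdeg_ℚ(a₁, b₁, …, aₙ, bₙ) ≥ n`. -/
theorem scp_Qbar_implies_scp_alg (h : SCPQbar)
    (ρ : ℂ) (hρ : IsAlgebraic ℚ ρ) (n : ℕ) (a b : Fin n → ℂ)
    (hpow : ∀ i, ∃ α : ℂ, Complex.exp α = a i ∧ Complex.exp (ρ * α) = b i)
    (hmi : ∀ m m' : Fin n → ℤ,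
      (∏ i, a i ^ m i) * (∏ i, b i ^ m' i) = 1 → m = 0 ∧ m' = 0) :
    (n : Cardinal) ≤ trdeg ℚ (IntermediateField.adjoin ℚ
      (Set.range a ∪ Set.range b)) := by
  choose α hα1 hα2 using hpow
  set c : Fin (n + n) → ℂ := Fin.append α (fun i => ρ * α i) with hc
  have hcL : ∀ j : Fin n, c (Fin.castAdd n j) = α j := fun j => Fin.append_left _ _ j
  have hcR : ∀ j : Fin n, c (Fin.natAdd n j) = ρ * α j := fun j => Fin.append_right _ _ j
  -- the exponentials of `c` are exactly the `a`s and `b`s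
  have hrangeexp : (Set.range fun i => Complex.exp (c i)) = Set.range a ∪ Set.range b := by
    have hexpc : (fun i => Complex.exp (c i)) = Fin.append a b := by
      funext i
      refine Fin.addCases (fun j => ?_) (fun j => ?_) i
      · rw [hcL j, hα1 j, Fin.append_left]
      · rw [hcR j, hα2 j, Fin.append_right]
    rw [hexpc, range_fin_append]
  -- the `c i` are linearly independent over `ℤ`, hence over `ℚ`
  have hliZ : LinearIndependent ℤ c := by
    rw [Fintype.linearIndependent_iff]
    intro g hg
    have h1 : Complex.exp (∑ i, g i • c i) = 1 := by rw [hg, Complex.exp_zero]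
    rw [Complex.exp_sum] at h1
    have h2 : ∀ i, Complex.exp (g i • c i) = Complex.exp (c i) ^ g i := fun i => by
      rw [zsmul_eq_mul, Complex.exp_int_mul]
    rw [Finset.prod_congr rfl (fun i _ => h2 i), Fin.prod_univ_add] at h1
    have key : (∏ j, a j ^ (fun j => g (Fin.castAdd n j)) j)
        * (∏ j, b j ^ (fun j => g (Fin.natAdd n j)) j) = 1 := by
      rw [← h1]
      congr 1
      · exact Finset.prod_congr rfl fun j _ => by rw [hcL j, hα1 j]
      · exact Finset.prod_congr rfl fun j _ => by rw [hcR j, hα2 j]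
    obtain ⟨hm, hm'⟩ := hmi _ _ key
    intro i
    refine Fin.addCases (fun j => ?_) (fun j => ?_) i
    · exact congrFun hm j
    · exact congrFun hm' j
  have hliQ : LinearIndependent ℚ c := (LinearIndependent.iff_fractionRing ℤ ℚ).mp hliZ
  -- rank over ℚ is `n + n`
  have hA : Module.rank ℚ (Submodule.span ℚ (Set.range c)) = ((n + n : ℕ) : Cardinal) := by
    rw [rank_span hliQ, Cardinal.mk_range_eq c hliQ.injective, Cardinal.mk_fin]
  -- rank over Qbar is at most `n`
  have hρ' : ρ ∈ Qbar := hρ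
  have hsub : Submodule.span Qbar (Set.range c) ≤ Submodule.span Qbar (Set.range α) := by
    rw [Submodule.span_le]
    rintro x ⟨i, rfl⟩
    refine Fin.addCases (fun j => ?_) (fun j => ?_) i
    · rw [hcL j]; exact Submodule.subset_span ⟨j, rfl⟩
    · rw [hcR j]
      have : ρ * α j = (⟨ρ, hρ'⟩ : Qbar) • α j := rfl
      rw [this]
      exact Submodule.smul_mem _ _ (Submodule.subset_span ⟨j, rfl⟩)
  have hB : Module.rank Qbar (Submodule.span Qbar (Set.range c)) ≤ (n : Cardinal) := by
    refine (Submodule.rank_mono hsub).trans ((rank_span_le _).trans ?_)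
    simpa using Cardinal.mk_range_le (f := α)
  -- apply SCP
  have hscp := h (n + n) c
  have hK : IntermediateField.adjoin ℚ (Set.range fun i => Complex.exp (c i))
      = IntermediateField.adjoin ℚ (Set.range a ∪ Set.range b) := by rw [hrangeexp]
  have htr : trdeg ℚ (IntermediateField.adjoin ℚ (Set.range fun i => Complex.exp (c i)))
      = trdeg ℚ (IntermediateField.adjoin ℚ (Set.range a ∪ Set.range b)) :=
    congrArg (fun K : IntermediateField ℚ ℂ => trdeg ℚ K) hK
  rw [htr, hA] at hscp
  have h3 : (n : Cardinal) + (n : Cardinal)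
      ≤ trdeg ℚ (IntermediateField.adjoin ℚ (Set.range a ∪ Set.range b)) + (n : Cardinal) := by
    have := hscp.trans (add_le_add_left hB _)
    rw [Nat.cast_add] at this
    calc (n : Cardinal) + n ≤ (n : Cardinal)
          + trdeg ℚ (IntermediateField.adjoin ℚ (Set.range a ∪ Set.range b)) := this
      _ = _ := add_comm _ _
  have h4 := (Cardinal.add_le_add_iff_of_lt_aleph0 (Cardinal.nat_lt_aleph0 n)).mp h3
  exact h4
end
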